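/- Fix R, C ≥ 1 and X ≥ 2. The map that sends each R×C matrix M with integer entries in {0,…,X} to the R×C array of shortest-path distances (d_{G_M}(a_j, b_k))_{1≤k≤R, 1≤j≤C} in its weighted grid embedding G_M is injective. -/

import Mathlib

/-- Vertices of the grid embedding: `a j` (top terminals), `b i` (right terminals),
`u i j` (grid intersections), `v i j` (subdivision vertex above `u i j`),
`w i j` (subdivision vertex to the right of `u i j`), `x i j` (shortcut vertices).
Indices are 1-based natural numbers; out-of-range vertices are isolated. -/
inductive GV : Type
  | a (j : ℕ)
  | b (i : ℕ)
  | u (i j : ℕ)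
  | v (i j : ℕ)
  | w (i j : ℕ)
  | x (i j : ℕ)
deriving DecidableEq

/-- One-directional edge weights of the grid embedding of a boolean `R × C` matrix `M`;
`⊤` means "no edge". -/
def dirW (R C : ℕ) (M : ℕ → ℕ → Bool) : GV → GV → ℕ∞
  | GV.a j, GV.v i' j' =>
      if i' = 1 ∧ j' = j ∧ 1 ≤ j ∧ j ≤ C then ((2 * j - 1 : ℕ) : ℕ∞) else ⊤
  | GV.v i j, GV.u i' j' =>
      if i' = i ∧ j' = j ∧ 1 ≤ i ∧ i ≤ R ∧ 1 ≤ j ∧ j ≤ C then 1 else ⊤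
  | GV.u i j, GV.v i' j' =>
      if i' = i + 1 ∧ j' = j ∧ 1 ≤ i ∧ i + 1 ≤ R ∧ 1 ≤ j ∧ j ≤ C then
        ((2 * j - 1 : ℕ) : ℕ∞) else ⊤
  | GV.u i j, GV.w i' j' =>
      if i' = i ∧ j' = j ∧ 1 ≤ i ∧ i ≤ R ∧ 1 ≤ j ∧ j ≤ C then 2 else ⊤
  | GV.w i j, GV.u i' j' =>
      if i' = i ∧ j' = j + 1 ∧ 1 ≤ i ∧ i ≤ R ∧ 1 ≤ j ∧ j + 1 ≤ C then
        ((2 * R - 2 : ℕ) : ℕ∞) else ⊤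
  | GV.w i j, GV.b i' =>
      if i' = i ∧ j = C ∧ 1 ≤ i ∧ i ≤ R ∧ 1 ≤ C then ((2 * R - 2 : ℕ) : ℕ∞) else ⊤
  | GV.v i j, GV.x i' j' =>
      if i' = i ∧ j' = j ∧ M i j = true ∧ 1 ≤ i ∧ i ≤ R ∧ 1 ≤ j ∧ j ≤ C then 1 else ⊤
  | GV.x i j, GV.w i' j' =>
      if i' = i ∧ j' = j ∧ M i j = true ∧ 1 ≤ i ∧ i ≤ R ∧ 1 ≤ j ∧ j ≤ C then 1 else ⊤
  | _, _ => ⊤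

/-- Symmetrization of a one-directional weight function. -/
noncomputable def symW {V : Type} (f : V → V → ℕ∞) : V → V → ℕ∞ := fun p q => min (f p q) (f q p)

/-- Edge weights of the grid embedding of a boolean matrix `M`. -/
noncomputable def gridW (R C : ℕ) (M : ℕ → ℕ → Bool) : GV → GV → ℕ∞ := symW (dirW R C M)

/-- One-directional edge weights of the weighted grid embedding of an `R × C` matrix `M`
with entries in `{0, …, X}`: the grid embedding of the all-ones boolean matrix with every
weight multiplied by `X²`, and the weight of each edge `(v i j, x i j)` increased by `M i j`. -/
def dirWt (R C X : ℕ) (M : ℕ → ℕ → ℕ) : GV → GV → ℕ∞ := fun p q =>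
  (X : ℕ∞) ^ 2 * dirW R C (fun _ _ => true) p q +
    (match p, q with
      | GV.v i j, GV.x i' j' => if i' = i ∧ j' = j then (M i j : ℕ∞) else 0
      | _, _ => 0)

/-- Edge weights of the weighted grid embedding of `M`. -/
noncomputable def wgridW (R C X : ℕ) (M : ℕ → ℕ → ℕ) : GV → GV → ℕ∞ := symW (dirWt R C X M)

/-- Edge weights of the mirrored grid `G'`: the (weighted, scaled by `X²`) grid embedding
with all shortcut vertices removed.  Mirroring is a weight-preserving graph isomorphism, so
the mirrored copy is represented by the same abstract graph. -/
noncomputable def mirW (R C X : ℕ) : GV → GV → ℕ∞ :=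
  fun p q => (X : ℕ∞) ^ 2 * gridW R C (fun _ _ => false) p q

/-- Total weight of a walk, given as its list of visited vertices. -/
def cost {V : Type} (W : V → V → ℕ∞) : List V → ℕ∞
  | p :: q :: l => W p q + cost W (q :: l)
  | _ => 0

/-- Shortest-path distance: the least total weight of a walk from `s` to `t`
(`⊤` if there is none; walks through a non-edge have cost `⊤`). -/
noncomputable def gdist {V : Type} (W : V → V → ℕ∞) (s t : V) : ℕ∞ :=
  sInf {c | ∃ l : List V, l.head? = some s ∧ l.getLast? = some t ∧ cost W l = c}


/-!
The distance from `a j` to `b k` is `X² (2jk + 2R(C - j) + 2R - 1) + M k j`, so the distance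
array determines `M`. The upper bound is the walk down column `j` to `v k j`, through the shortcut
`x k j`, and along row `k` to `b k`. For the lower bound, `basePot` changes by at most the weight
along every edge of the unit-weight grid embedding, vanishes at `a j` and equals
`2jk + 2R(C - j) + 2R - 1` at `b k`. The indicator `cutInd` of the part of row `k` past the shortcut
`(k, j)` is entered only through that shortcut or along an edge where `basePot` has slack at least
`1`. As `M k j ≤ X ≤ X²`, the function `X² basePot + M k j cutInd` then changes by at most the
weight along every edge of the weighted embedding, which gives the matching lower bound.
-/

section Walks

variable {V : Type} (W : V → V → ℕ∞)

theorem cost_append_of_getLast? {l : List V} {u : V} (h : l.getLast? = some u) (r : List V) :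
    cost W (l ++ r) = cost W l + cost W (u :: r) := by
  induction l with
  | nil => simp at h
  | cons a l ih =>
    cases l with
    | nil =>
      obtain rfl : a = u := by simpa using h
      simp [cost]
    | cons b l =>
      rw [List.getLast?_cons_cons] at h
      simp only [List.cons_append, cost] at ih ⊢
      rw [ih h, add_assoc]

theorem gdist_le_cost {s t : V} {l : List V} (hs : l.head? = some s) (ht : l.getLast? = some t) :
    gdist W s t ≤ cost W l :=
  sInf_le ⟨l, hs, ht, rfl⟩

theorem gdist_le_weight (p q : V) : gdist W p q ≤ W p q := by
  simpa [cost] using gdist_le_cost W (l := [p, q]) rfl rfl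

theorem exists_cost_eq_gdist {s t : V} (h : gdist W s t ≠ ⊤) :
    ∃ l : List V, l.head? = some s ∧ l.getLast? = some t ∧ cost W l = gdist W s t := by
  refine (csInf_mem (α := ℕ∞) (Set.nonempty_iff_ne_empty.2 fun he => h ?_) : gdist W s t ∈ _)
  rw [gdist, he, sInf_empty]

theorem gdist_triangle (s u t : V) : gdist W s t ≤ gdist W s u + gdist W u t := by
  by_cases hsu : gdist W s u = ⊤
  · simp [hsu]
  by_cases hut : gdist W u t = ⊤
  · simp [hut]
  obtain ⟨l₁, hs, hu, hl₁⟩ := exists_cost_eq_gdist W hsu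
  obtain ⟨_ | ⟨u', r⟩, hu', ht, hl₂⟩ := exists_cost_eq_gdist W hut
  · simp at hu'
  obtain rfl : u' = u := by simpa using hu'
  rw [← hl₁, ← hl₂, ← cost_append_of_getLast? W hu r]
  refine gdist_le_cost W ?_ ?_
  · cases l₁ <;> simp_all
  · rw [List.getLast?_append, hu]
    rw [List.getLast?_cons] at ht
    cases h : r.getLast? <;> simp_all

theorem gdist_triangle₃ (s u v t : V) :
    gdist W s t ≤ gdist W s u + gdist W u v + gdist W v t :=
  (gdist_triangle W s v t).trans (by gcongr; exact gdist_triangle W s u v)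

theorem le_cost_of_potential (φ : V → ℤ) (hφ : ∀ p q (n : ℕ), W p q = n → φ q ≤ φ p + n) :
    ∀ (l : List V) {s t : V} {n : ℕ}, l.head? = some s → l.getLast? = some t →
      cost W l = n → φ t ≤ φ s + n
  | [], _, _, _, hs, _, _ => by simp at hs
  | [p], s, t, n, hs, ht, hn => by
    obtain rfl : p = s := by simpa using hs
    obtain rfl : p = t := by simpa using ht
    obtain rfl : n = 0 := by simpa [cost] using hn.symm
    simp
  | p :: q :: l, s, t, n, hs, ht, hn => by
    obtain rfl : p = s := by simpa using hs
    obtain ⟨a, b, ha, hb, rfl⟩ := WithTop.add_eq_coe.1 hn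
    have hpq := hφ p q a ha.symm
    have hqt := le_cost_of_potential φ hφ (q :: l) rfl
      (by rwa [List.getLast?_cons_cons] at ht) hb.symm
    push_cast
    linarith

theorem natCast_le_gdist_of_potential (φ : V → ℤ)
    (hφ : ∀ p q (n : ℕ), W p q = n → φ q ≤ φ p + n) {s t : V} {d : ℕ}
    (hd : (d : ℤ) ≤ φ t - φ s) : (d : ℕ∞) ≤ gdist W s t := by
  refine le_sInf ?_
  rintro _ ⟨l, hs, ht, rfl⟩
  cases h : cost W l using ENat.recTopCoe with
  | top => exact le_top
  | coe n =>
    have := le_cost_of_potential W φ hφ l hs ht h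
    exact_mod_cast (by omega : d ≤ n)

theorem potential_of_symW {f : V → V → ℕ∞} {φ : V → ℤ}
    (hf : ∀ p q (n : ℕ), f p q = n → |φ q - φ p| ≤ n) (p q : V) (n : ℕ)
    (h : symW f p q = n) : φ q ≤ φ p + n := by
  rcases min_choice (f p q) (f q p) with h' | h' <;> rw [symW, h'] at h
  · linarith [(abs_le.1 (hf p q n h)).2]
  · linarith [(abs_le.1 (hf q p n h)).1]

end Walks

inductive GridEdge (R C : ℕ) : GV → GV → ℕ → Prop
  | av {c : ℕ} : 1 ≤ c → c ≤ C → GridEdge R C (.a c) (.v 1 c) (2 * c - 1)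
  | vu {i c : ℕ} : 1 ≤ i → i ≤ R → 1 ≤ c → c ≤ C → GridEdge R C (.v i c) (.u i c) 1
  | uv {i c : ℕ} : 1 ≤ i → i + 1 ≤ R → 1 ≤ c → c ≤ C →
      GridEdge R C (.u i c) (.v (i + 1) c) (2 * c - 1)
  | uw {i c : ℕ} : 1 ≤ i → i ≤ R → 1 ≤ c → c ≤ C → GridEdge R C (.u i c) (.w i c) 2
  | wu {i c : ℕ} : 1 ≤ i → i ≤ R → 1 ≤ c → c + 1 ≤ C →
      GridEdge R C (.w i c) (.u i (c + 1)) (2 * R - 2)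
  | wb {i : ℕ} : 1 ≤ i → i ≤ R → 1 ≤ C → GridEdge R C (.w i C) (.b i) (2 * R - 2)
  | vx {i c : ℕ} : 1 ≤ i → i ≤ R → 1 ≤ c → c ≤ C → GridEdge R C (.v i c) (.x i c) 1
  | xw {i c : ℕ} : 1 ≤ i → i ≤ R → 1 ≤ c → c ≤ C → GridEdge R C (.x i c) (.w i c) 1

theorem dirW_eq_natCast_iff {R C w : ℕ} {p q : GV} :
    dirW R C (fun _ _ => true) p q = w ↔ GridEdge R C p q w := by
  constructor
  · intro h
    cases p <;> cases q <;> simp only [dirW] at h <;> (try split_ifs at h with hc) <;>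
      (try exact absurd h (ENat.top_ne_natCast w))
    all_goals
      obtain ⟨rfl, rfl, hc⟩ := hc
      norm_cast at h
      subst h
      constructor <;> simp_all
  · intro h
    cases h <;> simp [dirW, *]

def shortcutLoad (M : ℕ → ℕ → ℕ) : GV → GV → ℕ
  | .v i j, .x i' j' => if i' = i ∧ j' = j then M i j else 0
  | _, _ => 0

theorem dirWt_eq (R C X : ℕ) (M : ℕ → ℕ → ℕ) (p q : GV) :
    dirWt R C X M p q = (X : ℕ∞) ^ 2 * dirW R C (fun _ _ => true) p q + shortcutLoad M p q := by
  cases p <;> cases q <;> simp only [dirWt, shortcutLoad, Nat.cast_ite, Nat.cast_zero]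

theorem exists_gridEdge_of_dirWt_eq {R C X n : ℕ} {M : ℕ → ℕ → ℕ} {p q : GV} (hX : X ≠ 0)
    (h : dirWt R C X M p q = n) :
    ∃ w, GridEdge R C p q w ∧ n = X ^ 2 * w + shortcutLoad M p q := by
  rw [dirWt_eq] at h
  cases hw : dirW R C (fun _ _ => true) p q using ENat.recTopCoe with
  | top =>
    rw [hw, ENat.mul_top (by positivity), top_add] at h
    exact absurd h (ENat.top_ne_natCast n)
  | coe w =>
    refine ⟨w, dirW_eq_natCast_iff.1 hw, ?_⟩
    rw [hw] at h
    exact_mod_cast h.symm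

theorem wgridW_le_of_gridEdge {R C X w : ℕ} {M : ℕ → ℕ → ℕ} {p q : GV} (h : GridEdge R C p q w) :
    wgridW R C X M p q ≤ ((X ^ 2 * w + shortcutLoad M p q : ℕ) : ℕ∞) := by
  calc wgridW R C X M p q ≤ dirWt R C X M p q := min_le_left _ _
    _ = _ := by rw [dirWt_eq, dirW_eq_natCast_iff.2 h]; push_cast; rfl

/-- For `c ≤ j`, `leftPot R j c i` is the length of the walk from `a j` along row `1` and down
column `c` to `u i c`; for `c > j`, `rightPot R j c i - 1` is that of the walk down column `j`,
through the shortcut of row `i` and along row `i` to `u i c`. -/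
def leftPot (R j c i : ℕ) : ℤ := 2 * j + 2 * R * ((j : ℤ) - c) + 2 * c * ((i : ℤ) - 1)

def rightPot (R j c i : ℕ) : ℤ := 2 * j * i + 2 * R * ((c : ℤ) - j)

def basePot (R C j : ℕ) : GV → ℤ
  | .a c => (if c ≤ j then leftPot R j c 1 - 1 else rightPot R j c 1) - (2 * c - 1)
  | .b i => rightPot R j C i + 2 * R - 1
  | .u i c => if c ≤ j then leftPot R j c i else rightPot R j c i - 1
  | .v i c => if c ≤ j then leftPot R j c i - 1 else rightPot R j c i
  | .w i c => if c < j then leftPot R j c i - 2 else rightPot R j c i + 1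
  | .x i c => if c < j then leftPot R j c i - 1 else rightPot R j c i

def cutInd (k j : ℕ) : GV → ℤ
  | .b i => if i = k then 1 else 0
  | .u i c => if i = k ∧ j < c then 1 else 0
  | .w i c | .x i c => if i = k ∧ j ≤ c then 1 else 0
  | _ => 0

theorem GridEdge.abs_basePot_sub_le {R C j w : ℕ} {p q : GV} (hj : j ≤ C)
    (h : GridEdge R C p q w) :
    |basePot R C j q - basePot R C j p| ≤ w := by
  rw [abs_le]
  -- In column `c = j` the two branches of `basePot` meet; there `omega` cannot match `c * i`
  -- with `j * i`.
  cases h <;> simp only [basePot, leftPot, rightPot] <;> split_ifs <;> push_cast <;> ring_nf <;>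
    first | omega | (constructor <;> nlinarith)

theorem GridEdge.cutInd_eq_or_slack {R C j k w : ℕ} {p q : GV} (hj : j ≤ C)
    (h : GridEdge R C p q w) :
    cutInd k j p = cutInd k j q ∨
      (cutInd k j q - cutInd k j p) * (basePot R C j q - basePot R C j p) + 1 ≤ w ∨
      (p = .v k j ∧ q = .x k j) := by
  cases h <;>
    simp only [cutInd, basePot, leftPot, rightPot, GV.v.injEq, GV.x.injEq, reduceCtorEq,
      and_false] <;>
    split_ifs <;> push_cast <;> ring_nf <;> first | omega | (right; left; nlinarith) | simp

theorem cutInd_eq_zero_or_one (k j : ℕ) (p : GV) : cutInd k j p = 0 ∨ cutInd k j p = 1 := by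
  cases p <;> simp only [cutInd] <;> (try split_ifs) <;> simp

theorem abs_mul_add_mul_sub_le {S m α Δ w I J : ℤ} (hm : 0 ≤ m) (hmS : m ≤ S) (hα : 0 ≤ α)
    (hI : I = 0 ∨ I = 1) (hJ : J = 0 ∨ J = 1) (hΔ : |Δ| ≤ w)
    (hcut : I = J ∨ (J - I) * Δ + 1 ≤ w ∨ m ≤ α) :
    |S * Δ + m * (J - I)| ≤ S * w + α := by
  rw [abs_le] at hΔ ⊢
  rcases hI with rfl | rfl <;> rcases hJ with rfl | rfl <;> constructor <;>
    rcases hcut with h | h | h <;> nlinarith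

def weightedPot (R C X j k : ℕ) (m : ℤ) (p : GV) : ℤ :=
  X ^ 2 * basePot R C j p + m * cutInd k j p

theorem GridEdge.abs_weightedPot_sub_le {R C X j k w α : ℕ} {m : ℤ} {p q : GV} (hj : j ≤ C)
    (hm : 0 ≤ m) (hmX : m ≤ X) (h : GridEdge R C p q w)
    (hload : p = .v k j → q = .x k j → m ≤ α) :
    |weightedPot R C X j k m q - weightedPot R C X j k m p| ≤ X ^ 2 * w + α := by
  have hcut := h.cutInd_eq_or_slack (k := k) hj
  have key := abs_mul_add_mul_sub_le (S := X ^ 2) hm (hmX.trans (Int.le_self_sq _))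
    (Int.natCast_nonneg α) (cutInd_eq_zero_or_one k j p) (cutInd_eq_zero_or_one k j q)
    (h.abs_basePot_sub_le hj) (by tauto)
  simp only [weightedPot]
  convert key using 2
  ring

theorem weightedPot_a_self (R C X j k : ℕ) (m : ℤ) : weightedPot R C X j k m (.a j) = 0 := by
  simp [weightedPot, basePot, cutInd, leftPot]

theorem weightedPot_b_self (R C X j k : ℕ) (m : ℤ) :
    weightedPot R C X j k m (.b k) =
      X ^ 2 * (2 * j * k + 2 * R * ((C : ℤ) - j) + 2 * R - 1) + m := by
  simp [weightedPot, basePot, cutInd, rightPot]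

section Distances

variable {R C X : ℕ} {M : ℕ → ℕ → ℕ}

theorem gdist_le_of_gridEdge {p q : GV} {w : ℕ} (h : GridEdge R C p q w) :
    gdist (wgridW R C X M) p q ≤ ((X ^ 2 * w + shortcutLoad M p q : ℕ) : ℕ∞) :=
  (gdist_le_weight _ p q).trans (wgridW_le_of_gridEdge h)

theorem gdist_a_v_le {i j : ℕ} (hj : 1 ≤ j) (hjC : j ≤ C) (hi : 1 ≤ i) (hiR : i ≤ R) :
    gdist (wgridW R C X M) (.a j) (.v i j) ≤ ((X ^ 2 * (2 * j * i - 1) : ℕ) : ℕ∞) := by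
  induction i, hi using Nat.le_induction with
  | base =>
    simpa [shortcutLoad] using gdist_le_of_gridEdge (X := X) (M := M) (GridEdge.av (R := R) hj hjC)
  | succ i hi ih =>
    have hji : 1 ≤ 2 * j * i := by nlinarith
    calc gdist (wgridW R C X M) (.a j) (.v (i + 1) j)
        ≤ gdist (wgridW R C X M) (.a j) (.v i j) + gdist (wgridW R C X M) (.v i j) (.u i j) +
            gdist (wgridW R C X M) (.u i j) (.v (i + 1) j) :=
          gdist_triangle₃ _ _ _ _ _
      _ ≤ ((X ^ 2 * (2 * j * i - 1) : ℕ) : ℕ∞) + ((X ^ 2 * 1 + 0 : ℕ) : ℕ∞) +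
            ((X ^ 2 * (2 * j - 1) + 0 : ℕ) : ℕ∞) := by
          gcongr
          · exact ih (by omega)
          · exact gdist_le_of_gridEdge (.vu hi (by omega) hj hjC)
          · exact gdist_le_of_gridEdge (.uv hi hiR hj hjC)
      _ = ((X ^ 2 * (2 * j * (i + 1) - 1) : ℕ) : ℕ∞) := by
          norm_cast
          zify [hji, (by omega : 1 ≤ 2 * j), (by nlinarith : 1 ≤ 2 * j * (i + 1))]
          ring

theorem gdist_v_w_le {i c : ℕ} (hi : 1 ≤ i) (hiR : i ≤ R) (hc : 1 ≤ c) (hcC : c ≤ C) :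
    gdist (wgridW R C X M) (.v i c) (.w i c) ≤ ((X ^ 2 * 2 + M i c : ℕ) : ℕ∞) :=
  calc gdist (wgridW R C X M) (.v i c) (.w i c)
      ≤ gdist (wgridW R C X M) (.v i c) (.x i c) + gdist (wgridW R C X M) (.x i c) (.w i c) :=
        gdist_triangle _ _ _ _
    _ ≤ ((X ^ 2 * 1 + M i c : ℕ) : ℕ∞) + ((X ^ 2 * 1 + 0 : ℕ) : ℕ∞) := by
        gcongr
        · simpa [shortcutLoad] using
            gdist_le_of_gridEdge (X := X) (M := M) (GridEdge.vx hi hiR hc hcC)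
        · exact gdist_le_of_gridEdge (.xw hi hiR hc hcC)
    _ = ((X ^ 2 * 2 + M i c : ℕ) : ℕ∞) := by norm_cast; ring

theorem gdist_w_b_le {i c : ℕ} (hi : 1 ≤ i) (hiR : i ≤ R) (hc : 1 ≤ c) (hcC : c ≤ C) :
    gdist (wgridW R C X M) (.w i c) (.b i) ≤
      ((X ^ 2 * (2 * R * (C - c) + 2 * R - 2) : ℕ) : ℕ∞) := by
  induction hn : C - c generalizing c with
  | zero =>
    obtain rfl : c = C := by omega
    simpa [shortcutLoad] using gdist_le_of_gridEdge (X := X) (M := M) (GridEdge.wb hi hiR hc)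
  | succ t ih =>
    calc gdist (wgridW R C X M) (.w i c) (.b i)
        ≤ gdist (wgridW R C X M) (.w i c) (.u i (c + 1)) +
            gdist (wgridW R C X M) (.u i (c + 1)) (.w i (c + 1)) +
            gdist (wgridW R C X M) (.w i (c + 1)) (.b i) :=
          gdist_triangle₃ _ _ _ _ _
      _ ≤ ((X ^ 2 * (2 * R - 2) + 0 : ℕ) : ℕ∞) + ((X ^ 2 * 2 + 0 : ℕ) : ℕ∞) +
            ((X ^ 2 * (2 * R * t + 2 * R - 2) : ℕ) : ℕ∞) := by
          gcongr
          · exact gdist_le_of_gridEdge (.wu hi hiR hc (by omega))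
          · exact gdist_le_of_gridEdge (.uw hi hiR (by omega) (by omega))
          · exact ih (by omega) (by omega) (by omega)
      _ = ((X ^ 2 * (2 * R * (t + 1) + 2 * R - 2) : ℕ) : ℕ∞) := by
          norm_cast
          zify [(by omega : 2 ≤ 2 * R), (by nlinarith : 2 ≤ 2 * R * t + 2 * R),
            (by nlinarith : 2 ≤ 2 * R * (t + 1) + 2 * R)]
          ring

theorem gdist_a_b_eq {j k : ℕ} (hX : 0 < X) (hj : 1 ≤ j) (hjC : j ≤ C) (hk : 1 ≤ k) (hkR : k ≤ R)
    (hM : M k j ≤ X) :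
    gdist (wgridW R C X M) (.a j) (.b k) =
      ((X ^ 2 * (2 * j * k + 2 * R * (C - j) + 2 * R - 1) + M k j : ℕ) : ℕ∞) := by
  have hjk : 1 ≤ 2 * j * k := by nlinarith
  refine le_antisymm ?_ ?_
  · calc gdist (wgridW R C X M) (.a j) (.b k)
        ≤ gdist (wgridW R C X M) (.a j) (.v k j) + gdist (wgridW R C X M) (.v k j) (.w k j) +
            gdist (wgridW R C X M) (.w k j) (.b k) :=
          gdist_triangle₃ _ _ _ _ _
      _ ≤ ((X ^ 2 * (2 * j * k - 1) : ℕ) : ℕ∞) + ((X ^ 2 * 2 + M k j : ℕ) : ℕ∞) +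
            ((X ^ 2 * (2 * R * (C - j) + 2 * R - 2) : ℕ) : ℕ∞) := by
          gcongr
          · exact gdist_a_v_le hj hjC hk hkR
          · exact gdist_v_w_le hk hkR hj hjC
          · exact gdist_w_b_le hk hkR hj hjC
      _ = _ := by
          norm_cast
          zify [hjk, hjC, (by nlinarith : 2 ≤ 2 * R * (C - j) + 2 * R),
            (by nlinarith : 1 ≤ 2 * j * k + 2 * R * (C - j) + 2 * R)]
          ring
  · refine natCast_le_gdist_of_potential _ (weightedPot R C X j k (M k j))
      (potential_of_symW fun p q n h => ?_) ?_
    · obtain ⟨w, hpq, rfl⟩ := exists_gridEdge_of_dirWt_eq hX.ne' h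
      push_cast
      exact hpq.abs_weightedPot_sub_le hjC (Int.natCast_nonneg _) (by exact_mod_cast hM)
        fun hp hq => by subst hp hq; simp [shortcutLoad]
    · rw [weightedPot_b_self, weightedPot_a_self, sub_zero]
      push_cast [hjC, (by nlinarith : 1 ≤ 2 * j * k + 2 * R * (C - j) + 2 * R)]
      rfl

end Distances

theorem wgrid_dist_injective_general (R C X : ℕ) (hX : 2 ≤ X)
    (M M' : ℕ → ℕ → ℕ)
    (hM : ∀ i j, 1 ≤ i → i ≤ R → 1 ≤ j → j ≤ C → M i j ≤ X)
    (hM' : ∀ i j, 1 ≤ i → i ≤ R → 1 ≤ j → j ≤ C → M' i j ≤ X)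
    (hdist : ∀ k j, 1 ≤ k → k ≤ R → 1 ≤ j → j ≤ C →
      gdist (wgridW R C X M) (GV.a j) (GV.b k) = gdist (wgridW R C X M') (GV.a j) (GV.b k)) :
    ∀ k j, 1 ≤ k → k ≤ R → 1 ≤ j → j ≤ C → M k j = M' k j := by
  intro k j hk hkR hj hjC
  have hd := hdist k j hk hkR hj hjC
  rw [gdist_a_b_eq (by omega) hj hjC hk hkR (hM k j hk hkR hj hjC),
    gdist_a_b_eq (by omega) hj hjC hk hkR (hM' k j hk hkR hj hjC)] at hd
  exact Nat.add_left_cancel (by exact_mod_cast hd)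

/-- For fixed `R, C ≥ 1` and `X ≥ 2`, the map sending an `R × C` matrix
with integer entries in `{0, …, X}` to the array of shortest-path distances
`(d_{G_M}(a j, b k))_{1≤k≤R, 1≤j≤C}` in its weighted grid embedding is injective. -/
theorem wgrid_dist_injective (R C X : ℕ) (hR : 1 ≤ R) (hC : 1 ≤ C) (hX : 2 ≤ X)
    (M M' : ℕ → ℕ → ℕ)
    (hM : ∀ i j, 1 ≤ i → i ≤ R → 1 ≤ j → j ≤ C → M i j ≤ X)
    (hM' : ∀ i j, 1 ≤ i → i ≤ R → 1 ≤ j → j ≤ C → M' i j ≤ X)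
    (hdist : ∀ k j, 1 ≤ k → k ≤ R → 1 ≤ j → j ≤ C →
      gdist (wgridW R C X M) (GV.a j) (GV.b k) = gdist (wgridW R C X M') (GV.a j) (GV.b k)) :
    ∀ k j, 1 ≤ k → k ≤ R → 1 ≤ j → j ≤ C → M k j = M' k j :=
  wgrid_dist_injective_general R C X hX M M' hM hM' hdist
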